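/- Suppose h_n → h in sup norm, c_n → c in ℝ, and for each n there is b_n ∈ ℝ with E_Q[f*(h_n + b_n)] − b_n ≤ c_n. Then the sequence (b_n) is bounded and has a convergent subsequence whose limit b* satisfies E_Q[f*(h + b*)] − b* ≤ c. -/

import Mathlib

open MeasureTheory Filter ENNReal

/-- Convex conjugate of an extended-real-valued function on ℝ. -/
noncomputable def fStar (f : ℝ → EReal) (s : ℝ) : EReal := ⨆ x : ℝ, ((s * x : ℝ) : EReal) - f x

/-- Positive part of an extended real, as an extended nonnegative real. -/
noncomputable def erealPos (x : EReal) : ℝ≥0∞ := if x = ⊤ then ⊤ else ENNReal.ofReal x.toReal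

/-- Integral of an extended-real-valued function, with values in [-∞,∞]. -/
noncomputable def eintegral {Ω : Type*} [MeasurableSpace Ω] (Q : Measure Ω) (g : Ω → EReal) : EReal :=
  ((∫⁻ x, erealPos (g x) ∂Q) : EReal) - ((∫⁻ x, erealPos (-(g x)) ∂Q) : EReal)

/-- The set B(Ω,Σ) of bounded measurable real-valued functions. -/
def BM (Ω : Type*) [MeasurableSpace Ω] : Set (Ω → ℝ) :=
  {g | Measurable g ∧ ∃ C, ∀ x, |g x| ≤ C}

/-- R(h) = inf_{b ∈ ℝ} ( E_Q[f*(h + b)] − b ). -/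
noncomputable def Rfun {Ω : Type*} [MeasurableSpace Ω] (Q : Measure Ω) (f : ℝ → EReal)
    (h : Ω → ℝ) : EReal :=
  ⨅ b : ℝ, eintegral Q (fun x => fStar f (h x + b)) - (b : EReal)

/-
Finiteness of `f` at two points `x₀ < 1 < x₁` gives the affine minorants `s x₀ - f x₀` and
`s x₁ - f x₁` of `f*`, hence `f* s ≥ s + δ |s| - R` for some `δ > 0`. Integrating, the constraint
`E_Q[f*(h_n + b_n)] - b_n ≤ c_n` forces `δ |b_n| ≤ c_n + O(1)`, so `(b_n)` is bounded and
Bolzano–Weierstrass gives a convergent subsequence. Along it the integrands are bounded below by a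
common constant `-K`; after shifting by `K` the signed integral becomes a lower Lebesgue integral,
and Fatou's lemma together with the lower semicontinuity of `f*` (a supremum of affine functions)
passes the constraint to the limit.
-/

open Topology

theorem TendstoUniformly.exists_forall_abs_le {α : Type*} {F : ℕ → α → ℝ} {g : α → ℝ}
    (hF : TendstoUniformly F g atTop) (hFb : ∀ n, ∃ C, ∀ x, |F n x| ≤ C)
    (hg : ∃ C, ∀ x, |g x| ≤ C) : ∃ C, ∀ n x, |F n x| ≤ C := by
  choose B hB using hFb
  obtain ⟨Cg, hCg⟩ := hg
  obtain ⟨N, hN⟩ := eventually_atTop.1 (Metric.tendstoUniformly_iff.1 hF 1 one_pos)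
  refine ⟨max (Cg + 1) (∑ i ∈ Finset.range N, |B i|), fun n x => ?_⟩
  rcases lt_or_ge n N with hn | hn
  · refine le_max_of_le_right ((hB n x).trans ((le_abs_self _).trans ?_))
    exact Finset.single_le_sum (fun i _ => abs_nonneg (B i)) (Finset.mem_range.2 hn)
  · have hdist := hN n hn x
    rw [Real.dist_eq] at hdist
    exact le_max_of_le_left
      (by linarith [abs_sub_abs_le_abs_sub (F n x) (g x), abs_sub_comm (g x) (F n x), hCg x])

theorem EReal.continuous_add_coe (K : ℝ) : Continuous fun y : EReal => y + K :=
  continuous_iff_continuousAt.2 fun _ =>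
    (EReal.continuousAt_add (Or.inr (EReal.coe_ne_bot K)) (Or.inr (EReal.coe_ne_top K))).comp
      (continuous_id.prodMk continuous_const).continuousAt

theorem EReal.sub_coe_le_coe_iff {x : EReal} {a b : ℝ} : x - a ≤ b ↔ x ≤ ((b + a : ℝ) : EReal) := by
  rw [EReal.sub_le_iff_le_add (by simp) (by simp), EReal.coe_add]

theorem EReal.coe_ennreal_sub_eq_of_add_eq {a b c d : ℝ≥0∞} (hc : c ≠ ⊤) (hd : d ≠ ⊤)
    (h : a + c = b + d) : (b : EReal) - c = a - d := by
  rcases eq_or_ne a ⊤ with rfl | ha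
  · obtain rfl : b = ⊤ := by simpa [hd] using h.symm
    rw [← EReal.coe_ennreal_toReal hc, ← EReal.coe_ennreal_toReal hd]
    simp
  have hb : b ≠ ⊤ := by rintro rfl; simp [ha, hc] at h
  have h' := congrArg ENNReal.toReal h
  rw [ENNReal.toReal_add ha hc, ENNReal.toReal_add hb hd] at h'
  rw [← EReal.coe_ennreal_toReal ha, ← EReal.coe_ennreal_toReal hb, ← EReal.coe_ennreal_toReal hc,
    ← EReal.coe_ennreal_toReal hd, ← EReal.coe_sub, ← EReal.coe_sub, EReal.coe_eq_coe_iff]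
  linarith

theorem EReal.toENNReal_add_coe_add_toENNReal_neg {y : EReal} {K : ℝ} (hK : 0 ≤ K)
    (hy : ((-K : ℝ) : EReal) ≤ y) :
    (y + K).toENNReal + (-y).toENNReal = y.toENNReal + ENNReal.ofReal K := by
  induction y using EReal.rec with
  | bot => simp at hy
  | top => simp
  | coe r =>
    have hr : -K ≤ r := EReal.coe_le_coe_iff.1 hy
    rw [← EReal.coe_add, ← EReal.coe_neg]
    simp only [EReal.real_coe_toENNReal]
    rcases le_total 0 r with h0 | h0
    · rw [ENNReal.ofReal_of_nonpos (neg_nonpos.2 h0), add_zero, ENNReal.ofReal_add h0 hK]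
    · rw [ENNReal.ofReal_of_nonpos h0, zero_add, ← ENNReal.ofReal_add (by linarith) (by linarith)]
      ring_nf

theorem mul_sub_le_fStar (f : ℝ → EReal) (s x : ℝ) : ((s * x : ℝ) : EReal) - f x ≤ fStar f s :=
  le_iSup (fun x => ((s * x : ℝ) : EReal) - f x) x

theorem lowerSemicontinuous_fStar (f : ℝ → EReal) : LowerSemicontinuous (fStar f) := by
  refine lowerSemicontinuous_iSup fun x => Continuous.lowerSemicontinuous ?_
  induction f x using EReal.rec with
  | bot => simpa only [EReal.coe_sub_bot] using continuous_const
  | coe r =>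
    simp_rw [← EReal.coe_sub]
    exact continuous_coe_real_ereal.comp (by fun_prop)
  | top => simpa only [EReal.sub_top] using continuous_const

theorem exists_add_mul_abs_sub_le_fStar {f : ℝ → EReal} {x₀ x₁ : ℝ} (h₀ : x₀ < 1) (h₁ : 1 < x₁)
    (hf₀ : f x₀ ≠ ⊤) (hf₁ : f x₁ ≠ ⊤) :
    ∃ δ > 0, ∃ R : ℝ, ∀ s : ℝ, ((s + δ * |s| - R : ℝ) : EReal) ≤ fStar f s := by
  set δ := min (1 - x₀) (x₁ - 1)
  set R := max (f x₀).toReal (f x₁).toReal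
  have hδ₀ : δ ≤ 1 - x₀ := min_le_left _ _
  have hδ₁ : δ ≤ x₁ - 1 := min_le_right _ _
  have hR₀ : (f x₀).toReal ≤ R := le_max_left _ _
  have hR₁ : (f x₁).toReal ≤ R := le_max_right _ _
  -- `(f x).toReal` bounds `f x` from above also in the junk case `f x = ⊥`.
  have affine_le : ∀ {x}, f x ≠ ⊤ → ∀ s, ((s * x - (f x).toReal : ℝ) : EReal) ≤ fStar f s :=
    fun hx s => (EReal.coe_sub _ _ ▸ EReal.sub_le_sub le_rfl (EReal.le_coe_toReal hx)).trans
      (mul_sub_le_fStar f s _)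
  refine ⟨δ, lt_min (by linarith) (by linarith), R, fun s => ?_⟩
  rcases le_total 0 s with hs | hs
  · refine le_trans (EReal.coe_le_coe_iff.2 ?_) (affine_le hf₁ s)
    rw [abs_of_nonneg hs]
    nlinarith
  · refine le_trans (EReal.coe_le_coe_iff.2 ?_) (affine_le hf₀ s)
    rw [abs_of_nonpos hs]
    nlinarith

theorem erealPos_eq_toENNReal : erealPos = EReal.toENNReal := rfl

section eintegral

variable {Ω : Type*} [MeasurableSpace Ω] (Q : Measure Ω) [IsProbabilityMeasure Q]

theorem coe_le_eintegral {g : Ω → EReal} {a : ℝ} (hg : ∀ ω, (a : EReal) ≤ g ω) :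
    (a : EReal) ≤ eintegral Q g := by
  have hpos : ENNReal.ofReal a ≤ ∫⁻ ω, (g ω).toENNReal ∂Q := by
    simpa using lintegral_mono (μ := Q) fun ω => EReal.toENNReal_le_toENNReal (hg ω)
  have hneg : ∫⁻ ω, (-g ω).toENNReal ∂Q ≤ ENNReal.ofReal (-a) := by
    simpa using lintegral_mono (μ := Q)
      fun ω => EReal.toENNReal_le_toENNReal (EReal.neg_le_neg_iff.2 (hg ω))
  have ha : (a : EReal) =
      ((ENNReal.ofReal a : ℝ≥0∞) : EReal) - ((ENNReal.ofReal (-a) : ℝ≥0∞) : EReal) := by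
    rw [EReal.coe_ennreal_ofReal, EReal.coe_ennreal_ofReal]
    rcases le_total 0 a with h0 | h0
    · rw [max_eq_left h0, max_eq_right (by linarith)]; simp
    · rw [max_eq_right h0, max_eq_left (by linarith)]; simp
  rw [eintegral, erealPos_eq_toENNReal, ha]
  exact EReal.sub_le_sub (EReal.coe_ennreal_le_coe_ennreal_iff.2 hpos)
    (EReal.coe_ennreal_le_coe_ennreal_iff.2 hneg)

theorem eintegral_eq_lintegral_add_sub {g : Ω → EReal} {K : ℝ} (hK : 0 ≤ K) (hg : Measurable g)
    (hgK : ∀ ω, ((-K : ℝ) : EReal) ≤ g ω) :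
    eintegral Q g = ((∫⁻ ω, (g ω + K).toENNReal ∂Q : ℝ≥0∞) : EReal) - K := by
  have hneg : ∫⁻ ω, (-g ω).toENNReal ∂Q ≤ ENNReal.ofReal K := by
    simpa using lintegral_mono (μ := Q) fun ω =>
      EReal.toENNReal_le_toENNReal (EReal.neg_le_neg_iff.2 (hgK ω))
  have hsum : (∫⁻ ω, (g ω + K).toENNReal ∂Q) + ∫⁻ ω, (-g ω).toENNReal ∂Q =
      (∫⁻ ω, (g ω).toENNReal ∂Q) + ENNReal.ofReal K := by
    have hm : Measurable fun ω => (-g ω).toENNReal := hg.neg.ereal_toENNReal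
    rw [← lintegral_add_right _ hm,
      lintegral_congr fun ω => EReal.toENNReal_add_coe_add_toENNReal_neg hK (hgK ω)]
    simp [lintegral_add_right _ measurable_const]
  rw [eintegral, erealPos_eq_toENNReal,
    EReal.coe_ennreal_sub_eq_of_add_eq (ne_top_of_le_ne_top ENNReal.ofReal_ne_top hneg)
      ENNReal.ofReal_ne_top hsum, EReal.coe_ennreal_ofReal, max_eq_left hK]

theorem eintegral_le_of_le_liminf {g : ℕ → Ω → EReal} {G : Ω → EReal} {γ : ℕ → ℝ} {γ₀ K : ℝ}
    (hK : 0 ≤ K) (hg : ∀ n, Measurable (g n)) (hG : Measurable G)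
    (hgK : ∀ n ω, ((-K : ℝ) : EReal) ≤ g n ω) (hGK : ∀ ω, ((-K : ℝ) : EReal) ≤ G ω)
    (hGg : ∀ ω, G ω ≤ liminf (fun n => g n ω) atTop)
    (hgγ : ∀ n, eintegral Q (g n) ≤ γ n) (hγ : Tendsto γ atTop (𝓝 γ₀)) :
    eintegral Q G ≤ γ₀ := by
  set u : EReal → ℝ≥0∞ := fun y => (y + K).toENNReal
  have hu_mono : Monotone u := fun y z hyz => EReal.toENNReal_le_toENNReal (by gcongr)
  have hu_cont : Continuous u := (EReal.continuous_add_coe K).ereal_toENNReal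
  have hγK : 0 ≤ γ₀ + K := by
    have := ge_of_tendsto hγ (Eventually.of_forall fun n =>
      EReal.coe_le_coe_iff.1 ((coe_le_eintegral Q (hgK n)).trans (hgγ n)))
    linarith
  have hbound : ∀ n, ∫⁻ ω, u (g n ω) ∂Q ≤ ENNReal.ofReal (γ n + K) := fun n => by
    have := hgγ n
    rw [eintegral_eq_lintegral_add_sub Q hK (hg n) (hgK n), EReal.sub_coe_le_coe_iff] at this
    exact EReal.toENNReal_coe.symm.trans_le (EReal.toENNReal_le_toENNReal this)
  have hfatou : ∫⁻ ω, u (G ω) ∂Q ≤ ENNReal.ofReal (γ₀ + K) :=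
    calc ∫⁻ ω, u (G ω) ∂Q
        ≤ ∫⁻ ω, liminf (fun n => u (g n ω)) atTop ∂Q := lintegral_mono fun ω =>
          (hu_mono (hGg ω)).trans_eq (hu_mono.map_liminf_of_continuousAt _ hu_cont.continuousAt)
      _ ≤ liminf (fun n => ∫⁻ ω, u (g n ω) ∂Q) atTop :=
          lintegral_liminf_le fun n => measurable_ereal_toENNReal.comp ((hg n).add_const _)
      _ ≤ liminf (fun n => ENNReal.ofReal (γ n + K)) atTop :=
          liminf_le_liminf (Eventually.of_forall hbound)
      _ = ENNReal.ofReal (γ₀ + K) := (ENNReal.tendsto_ofReal (hγ.add_const K)).liminf_eq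
  rw [eintegral_eq_lintegral_add_sub Q hK hG hGK, EReal.sub_coe_le_coe_iff]
  calc _ ≤ ((ENNReal.ofReal (γ₀ + K) : ℝ≥0∞) : EReal) :=
        EReal.coe_ennreal_le_coe_ennreal_iff.2 hfatou
    _ = _ := by rw [EReal.coe_ennreal_ofReal, max_eq_left hγK]

theorem abs_le_of_eintegral_fStar_sub_le {f : ℝ → EReal} {δ R C β γ : ℝ} (hδ : 0 < δ)
    (hR : ∀ s : ℝ, ((s + δ * |s| - R : ℝ) : EReal) ≤ fStar f s) {w : Ω → ℝ}
    (hw : ∀ ω, |w ω| ≤ C) (hβ : eintegral Q (fun ω => fStar f (w ω + β)) - β ≤ γ) :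
    |β| ≤ (γ + (1 + δ) * C + R) / δ := by
  have hlow : ((β - C + δ * (|β| - C) - R : ℝ) : EReal) ≤
      eintegral Q (fun ω => fStar f (w ω + β)) := by
    refine coe_le_eintegral Q fun ω => le_trans (EReal.coe_le_coe_iff.2 ?_) (hR _)
    have hwC := abs_le.1 (hw ω)
    have habs : |β| - C ≤ |w ω + β| := by
      have := abs_add_le (w ω + β) (-w ω)
      rw [abs_neg, add_neg_cancel_comm] at this
      linarith [hw ω]
    nlinarith
  rw [EReal.sub_coe_le_coe_iff] at hβ
  have := EReal.coe_le_coe_iff.1 (hlow.trans hβ)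
  rw [le_div_iff₀ hδ]
  linarith

theorem eintegral_fStar_sub_le_of_tendsto {f : ℝ → EReal} {R C M : ℝ}
    (hR : ∀ s : ℝ, ((s - R : ℝ) : EReal) ≤ fStar f s) {w : ℕ → Ω → ℝ} {w₀ : Ω → ℝ}
    {β γ : ℕ → ℝ} {β₀ γ₀ : ℝ} (hw : ∀ n, Measurable (w n)) (hw₀ : Measurable w₀)
    (hwC : ∀ n ω, |w n ω| ≤ C) (hβM : ∀ n, |β n| ≤ M)
    (hw_lim : ∀ ω, Tendsto (fun n => w n ω) atTop (𝓝 (w₀ ω))) (hβ_lim : Tendsto β atTop (𝓝 β₀))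
    (hγ_lim : Tendsto γ atTop (𝓝 γ₀))
    (hle : ∀ n, eintegral Q (fun ω => fStar f (w n ω + β n)) - β n ≤ γ n) :
    eintegral Q (fun ω => fStar f (w₀ ω + β₀)) - β₀ ≤ γ₀ := by
  have hw₀C : ∀ ω, |w₀ ω| ≤ C := fun ω => le_of_tendsto' (hw_lim ω).abs fun n => hwC n ω
  have hβ₀M : |β₀| ≤ M := le_of_tendsto' hβ_lim.abs hβM
  have hbelow : ∀ {v b : ℝ}, |v| ≤ C → |b| ≤ M →
      ((-(|C| + M + |R|) : ℝ) : EReal) ≤ fStar f (v + b) :=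
    fun {v b} hv hb => le_trans (EReal.coe_le_coe_iff.2 (by
      linarith [abs_le.1 hv, abs_le.1 hb, le_abs_self C, le_abs_self R])) (hR _)
  have hmeas := (lowerSemicontinuous_fStar f).measurable
  rw [EReal.sub_coe_le_coe_iff]
  refine eintegral_le_of_le_liminf Q
    (by linarith [abs_nonneg C, abs_nonneg R, (abs_nonneg _).trans hβ₀M])
    (fun n => hmeas.comp ((hw n).add_const _)) (hmeas.comp (hw₀.add_const _))
    (fun n ω => hbelow (hwC n ω) (hβM n)) (fun ω => hbelow (hw₀C ω) hβ₀M) (fun ω => ?_)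
    (fun n => EReal.sub_coe_le_coe_iff.1 (hle n)) (hγ_lim.add hβ_lim)
  exact ((lowerSemicontinuous_fStar f).le_liminf _).trans
    ((hw_lim ω).add hβ_lim).liminf_le_liminf_comp

end eintegral

theorem bseq_bounded_subseq_general {Ω : Type*} [MeasurableSpace Ω]
    (Q : Measure Ω) [IsProbabilityMeasure Q] (f : ℝ → EReal)
    (hfin : ∃ ε > (0:ℝ), ∀ x : ℝ, |x - 1| < ε → f x ≠ ⊤)
    (h : Ω → ℝ) (hh : h ∈ BM Ω) (hn : ℕ → Ω → ℝ) (hhn : ∀ n, hn n ∈ BM Ω)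
    (hunif : TendstoUniformly hn h atTop)
    (c : ℝ) (cn : ℕ → ℝ) (hc : Tendsto cn atTop (nhds c))
    (b : ℕ → ℝ)
    (hb : ∀ n, eintegral Q (fun x => fStar f (hn n x + b n)) - (b n : EReal) ≤ (cn n : EReal)) :
    (∃ M, ∀ n, |b n| ≤ M) ∧
    ∃ (φ : ℕ → ℕ) (bstar : ℝ), StrictMono φ ∧ Tendsto (fun n => b (φ n)) atTop (nhds bstar) ∧
      eintegral Q (fun x => fStar f (h x + bstar)) - (bstar : EReal) ≤ (c : EReal) := by
  obtain ⟨ε, hε, hfin⟩ := hfin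
  obtain ⟨δ, hδ, R, hR⟩ := exists_add_mul_abs_sub_le_fStar (f := f) (x₀ := 1 - ε / 2)
    (x₁ := 1 + ε / 2) (by linarith) (by linarith)
    (hfin _ (by rw [abs_lt]; constructor <;> linarith))
    (hfin _ (by rw [abs_lt]; constructor <;> linarith))
  obtain ⟨C, hC⟩ := hunif.exists_forall_abs_le (fun n => (hhn n).2) hh.2
  obtain ⟨Cc, hCc⟩ := hc.bddAbove_range
  set M := (Cc + (1 + δ) * C + R) / δ
  have hbM : ∀ n, |b n| ≤ M := fun n =>
    (abs_le_of_eintegral_fStar_sub_le Q hδ hR (hC n) (hb n)).trans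
      (div_le_div_of_nonneg_right (by linarith [hCc ⟨n, rfl⟩]) hδ.le)
  refine ⟨⟨M, hbM⟩, ?_⟩
  obtain ⟨bstar, -, φ, hφ, hbφ⟩ := tendsto_subseq_of_bounded (Metric.isBounded_Icc (-M) M)
    fun n => Set.mem_Icc.2 (abs_le.1 (hbM n))
  have hR' : ∀ s : ℝ, ((s - R : ℝ) : EReal) ≤ fStar f s := fun s =>
    le_trans (EReal.coe_le_coe_iff.2 (by linarith [mul_nonneg hδ.le (abs_nonneg s)])) (hR s)
  exact ⟨φ, bstar, hφ, hbφ, eintegral_fStar_sub_le_of_tendsto Q hR'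
    (fun n => (hhn (φ n)).1) hh.1 (fun n => hC (φ n)) (fun n => hbM (φ n))
    (fun ω => (hunif.tendsto_at ω).comp hφ.tendsto_atTop) hbφ (hc.comp hφ.tendsto_atTop)
    (fun n => hb (φ n))⟩

/-- If h_n → h uniformly, c_n → c, and E_Q[f*(h_n + b_n)] − b_n ≤ c_n, then (b_n) is bounded
and has a convergent subsequence whose limit b* satisfies E_Q[f*(h + b*)] − b* ≤ c. -/
theorem bseq_bounded_subseq {Ω : Type*} [MeasurableSpace Ω]
    (Q : Measure Ω) [IsProbabilityMeasure Q] (f : ℝ → EReal)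
    (hlsc : LowerSemicontinuous f)
    (hconv : ∀ (x y a b : ℝ), 0 < a → 0 < b → a + b = 1 →
      f (a * x + b * y) ≤ (a : EReal) * f x + (b : EReal) * f y)
    (hbot : ∀ x, f x ≠ ⊥) (h1 : f 1 = 0) (hneg : ∀ x : ℝ, x < 0 → f x = ⊤)
    (hfin : ∃ ε > (0:ℝ), ∀ x : ℝ, |x - 1| < ε → f x ≠ ⊤)
    (h : Ω → ℝ) (hh : h ∈ BM Ω) (hn : ℕ → Ω → ℝ) (hhn : ∀ n, hn n ∈ BM Ω)
    (hunif : TendstoUniformly hn h atTop)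
    (c : ℝ) (cn : ℕ → ℝ) (hc : Tendsto cn atTop (nhds c))
    (b : ℕ → ℝ)
    (hb : ∀ n, eintegral Q (fun x => fStar f (hn n x + b n)) - (b n : EReal) ≤ (cn n : EReal)) :
    (∃ M, ∀ n, |b n| ≤ M) ∧
    ∃ (φ : ℕ → ℕ) (bstar : ℝ), StrictMono φ ∧ Tendsto (fun n => b (φ n)) atTop (nhds bstar) ∧
      eintegral Q (fun x => fStar f (h x + bstar)) - (bstar : EReal) ≤ (c : EReal) :=
  bseq_bounded_subseq_general Q f hfin h hh hn hhn hunif c cn hc b hb
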